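/- (Theorem 2: oracle-optimal sequential sampling policy.) Fix N ≥ 1, p ∈ (0,1)^N, τ ∈ (0,1), and budget n_b ≥ 1. In the oracle adaptive sampling model — filtration (ℱ_t); ℱ_{t−1}-measurable random probability vectors q_t ∈ (0,1]^N with q_t(j) ≥ τ/N a.s.; I_t with P(I_t = j | ℱ_{t−1}) = q_t(j) a.s.; Y_t ∈ {0,1} with P(Y_t = 1 | ℱ_{t−1}, I_t) = p_{I_t} a.s.; ℱ_t ⊇ σ(ℱ_{t−1}, I_t, Y_t) — define M_{n_b} = Σ_{t=1}^{n_b} (Y_t − p_{I_t})/q_t(I_t). Then Var(M_{n_b}) ≥ n_b·( Σ_{j=1}^N √(p_j(1 − p_j)) )², and this lower bound is attained exactly when, for every t, q_t(j) = √(p_j(1−p_j)) / Σ_{k=1}^N √(p_k(1−p_k)) almost surely (provided this time-independent policy satisfies the assumed lower bound). In particular, the variance-minimizing policy is time-independent and uniquely given by q_t(j) ∝ √(p_j(1 − p_j)). -/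

import Mathlib

/-!
Write `X_t = (Y_t - p_{I_t}) / q_t(I_t)` for the increments of `M`. Conditioning on the past
together with `I_t`, the Bernoulli residual `Y_t - p_{I_t}` has mean `0` and variance
`p_{I_t}(1 - p_{I_t})`; averaging next over `I_t ~ q_t` gives `E[X_t | ℱ_{t-1}] = 0` and
`E[X_t²] = E[∑_j p_j(1 - p_j) / q_t(j)]`. The increments are therefore orthogonal, so `Var M` is
the sum over rounds of these expected costs. With `a_j = √(p_j(1 - p_j))`, the identity
`∑_j a_j² / r_j - (∑_j a_j)² = ∑_j (a_j - (∑_k a_k) r_j)² / r_j`, valid for every probability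
vector `r` with positive entries, bounds each cost below by `(∑_j a_j)²`, with equality exactly
at `r ∝ a`.
-/

open MeasureTheory Finset ProbabilityTheory
open scoped ENNReal

namespace Finset

variable {ι : Type*} (s : Finset ι) (a : ι → ℝ) {r : ι → ℝ}

lemma sum_sq_div_sub_sq_sum (hr : ∀ i ∈ s, r i ≠ 0) (hr1 : ∑ i ∈ s, r i = 1) :
    ∑ i ∈ s, a i ^ 2 / r i - (∑ i ∈ s, a i) ^ 2
      = ∑ i ∈ s, (a i - (∑ j ∈ s, a j) * r i) ^ 2 / r i := by
  set S := ∑ j ∈ s, a j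
  have hterm : ∀ i ∈ s,
      (a i - S * r i) ^ 2 / r i = a i ^ 2 / r i - 2 * S * a i + S ^ 2 * r i := by
    intro i hi
    field_simp [hr i hi]
    ring
  rw [sum_congr rfl hterm, sum_add_distrib, sum_sub_distrib, ← mul_sum, ← mul_sum, hr1]
  ring

lemma sq_sum_le_sum_sq_div (hr : ∀ i ∈ s, 0 < r i) (hr1 : ∑ i ∈ s, r i = 1) :
    (∑ i ∈ s, a i) ^ 2 ≤ ∑ i ∈ s, a i ^ 2 / r i := by
  simpa [hr1] using sq_sum_div_le_sum_sq_div s a hr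

lemma sum_sq_div_eq_sq_sum_iff (hr : ∀ i ∈ s, 0 < r i) (hr1 : ∑ i ∈ s, r i = 1)
    (ha : ∑ i ∈ s, a i ≠ 0) :
    ∑ i ∈ s, a i ^ 2 / r i = (∑ i ∈ s, a i) ^ 2 ↔ ∀ i ∈ s, r i = a i / ∑ j ∈ s, a j := by
  rw [← sub_eq_zero, sum_sq_div_sub_sq_sum s a (fun i hi => (hr i hi).ne') hr1,
    sum_eq_zero_iff_of_nonneg fun i hi => div_nonneg (sq_nonneg _) (hr i hi).le]
  refine forall₂_congr fun i hi => ?_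
  rw [div_eq_zero_iff, or_iff_left (hr i hi).ne', sq_eq_zero_iff, sub_eq_zero, eq_div_iff ha,
    mul_comm, eq_comm]

end Finset

section

variable {Ω : Type*} {m m₀ : MeasurableSpace Ω} {μ : Measure Ω}

lemma measurable_apply_index {ι : Type*} [Countable ι] [MeasurableSpace ι]
    [MeasurableSingletonClass ι] {g : Ω → ι → ℝ} {I : Ω → ι}
    (hg : ∀ j, Measurable[m] fun ω => g ω j) (hI : Measurable[m] I) :
    Measurable[m] fun ω => g ω (I ω) :=
  (measurable_from_prod_countable_left (f := fun x : Ω × ι => g x.1 x.2) hg).comp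
    (measurable_id.prodMk hI)

lemma condExp_mul_eq_zero_of_condExp_eq_zero {f g : Ω → ℝ} (hf : StronglyMeasurable[m] f)
    (hfg : Integrable (f * g) μ) (hg : Integrable g μ) (hg0 : μ[g | m] =ᵐ[μ] 0) :
    μ[f * g | m] =ᵐ[μ] 0 :=
  (condExp_mul_of_stronglyMeasurable_left hf hfg hg).trans (by
    filter_upwards [hg0] with ω hω
    simp [hω])

section FiniteMeasure

variable [IsFiniteMeasure μ]

lemma integral_mul_eq_of_condExp_eq (hm : m ≤ m₀) {f g h : Ω → ℝ}
    (hf : StronglyMeasurable[m] f) (hfg : Integrable (f * g) μ) (hg : Integrable g μ)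
    (hgh : μ[g | m] =ᵐ[μ] h) :
    ∫ ω, f ω * g ω ∂μ = ∫ ω, f ω * h ω ∂μ := by
  rw [← integral_condExp hm]
  exact integral_congr_ae
    ((condExp_mul_of_stronglyMeasurable_left hf hfg hg).trans (.mul (.refl _ f) hgh))

lemma condExp_bernoulli_residual (hm : m ≤ m₀) {Y P : Ω → ℝ} (hY01 : ∀ ω, Y ω = 0 ∨ Y ω = 1)
    (hY : Measurable[m₀] Y) (hP : StronglyMeasurable[m] P)
    (hP01 : ∀ ω, P ω ∈ Set.Icc (0 : ℝ) 1) (hYP : μ[Y | m] =ᵐ[μ] P) :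
    μ[Y - P | m] =ᵐ[μ] 0 ∧ μ[(Y - P) ^ 2 | m] =ᵐ[μ] P * (1 - P) := by
  have hY_int : Integrable Y μ := Integrable.of_bound hY.aestronglyMeasurable 1
    (.of_forall fun ω => by rcases hY01 ω with h | h <;> simp [h])
  have hP_mem : MemLp P 2 μ := MemLp.of_bound (hP.mono hm).aestronglyMeasurable 1
    (.of_forall fun ω => by rw [Real.norm_eq_abs, abs_of_nonneg (hP01 ω).1]; exact (hP01 ω).2)
  have hP_int : Integrable P μ := hP_mem.integrable one_le_two
  have hP2 : Integrable (P ^ 2) μ := hP_mem.integrable_sq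
  set A : Ω → ℝ := fun ω => 1 - 2 * P ω
  have hA : StronglyMeasurable[m] A := stronglyMeasurable_const.sub (hP.const_mul 2)
  have hAY : Integrable (A * Y) μ :=
    hY_int.bdd_mul (c := 1) (hA.mono hm).aestronglyMeasurable (.of_forall fun ω => by
      rw [Real.norm_eq_abs, abs_le]
      constructor <;> linarith [(hP01 ω).1, (hP01 ω).2])
  -- on `{0, 1}` the square `(Y - P)²` is affine in `Y`
  have hsq : (Y - P) ^ 2 = A * Y + P ^ 2 := by
    ext ω
    rcases hY01 ω with h | h <;>
      simp only [Pi.sub_apply, Pi.pow_apply, Pi.add_apply, Pi.mul_apply, A, h] <;> ring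
  constructor
  · refine (condExp_sub hY_int hP_int m).trans ?_
    rw [condExp_of_stronglyMeasurable hm hP hP_int]
    filter_upwards [hYP] with ω hω
    simp [hω]
  · rw [hsq]
    refine (condExp_add hAY hP2 m).trans ?_
    rw [condExp_of_stronglyMeasurable hm (hP.pow 2) hP2]
    filter_upwards [condExp_mul_of_stronglyMeasurable_left hA hAY hY_int, hYP] with ω h1 h2
    simp only [Pi.add_apply, h1, Pi.mul_apply, h2, Pi.pow_apply, Pi.sub_apply, Pi.one_apply, A]
    ring

lemma integral_apply_index_eq_sum {ι : Type*} [Fintype ι] [DecidableEq ι] [MeasurableSpace ι]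
    [MeasurableSingletonClass ι] (hm : m ≤ m₀) {I : Ω → ι} (hI : Measurable[m₀] I)
    {q g : Ω → ι → ℝ}
    (hIq : ∀ j, μ[fun ω => if I ω = j then (1 : ℝ) else 0 | m] =ᵐ[μ] fun ω => q ω j)
    (hg : ∀ j, StronglyMeasurable[m] fun ω => g ω j)
    (hg_int : ∀ j, Integrable (fun ω => g ω j) μ) :
    ∫ ω, g ω (I ω) ∂μ = ∑ j, ∫ ω, g ω j * q ω j ∂μ := by
  have hind : ∀ j, Integrable (fun ω => if I ω = j then (1 : ℝ) else 0) μ := fun j =>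
    Integrable.of_bound ((measurable_const.ite (hI (measurableSet_singleton j))
      measurable_const).aestronglyMeasurable) 1 (.of_forall fun ω => by split_ifs <;> simp)
  have hprod : ∀ j, Integrable (fun ω => g ω j * if I ω = j then (1 : ℝ) else 0) μ := fun j =>
    (hg_int j).mul_bdd (c := 1) (hind j).aestronglyMeasurable
      (.of_forall fun ω => by split_ifs <;> simp)
  calc ∫ ω, g ω (I ω) ∂μ = ∫ ω, ∑ j, g ω j * (if I ω = j then (1 : ℝ) else 0) ∂μ := by simp
    _ = ∑ j, ∫ ω, g ω j * q ω j ∂μ := by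
      rw [integral_finsetSum _ fun j _ => hprod j]
      exact sum_congr rfl fun j _ =>
        integral_mul_eq_of_condExp_eq hm (hg j) (hprod j) (hind j) (hIq j)

end FiniteMeasure

section ProbabilityMeasure

variable [IsProbabilityMeasure μ]

lemma variance_sum_eq_sum_integral_sq {ℱ : Filtration ℕ m₀}
    {X : ℕ → Ω → ℝ} {s : Finset ℕ} (hX_meas : ∀ t ∈ s, StronglyMeasurable[ℱ t] (X t))
    (hX : ∀ t ∈ s, MemLp (X t) 2 μ) (hX_mart : ∀ t ∈ s, μ[X t | ℱ (t - 1)] =ᵐ[μ] 0) :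
    variance (fun ω => ∑ t ∈ s, X t ω) μ = ∑ t ∈ s, ∫ ω, X t ω ^ 2 ∂μ := by
  have hmean : ∀ t ∈ s, μ[X t] = 0 := fun t ht => by
    rw [← integral_condExp (ℱ.le _), integral_congr_ae (hX_mart t ht)]
    simp
  have horth : ∀ u ∈ s, ∀ t ∈ s, u < t → ∫ ω, X u ω * X t ω ∂μ = 0 := fun u hu t ht hut => by
    rw [integral_mul_eq_of_condExp_eq (ℱ.le (t - 1))
      ((hX_meas u hu).mono (ℱ.mono (Nat.le_sub_one_of_lt hut)))
      ((hX u hu).integrable_mul (hX t ht)) ((hX t ht).integrable one_le_two) (hX_mart t ht)]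
    simp
  have hcov : ∀ u ∈ s, ∀ t ∈ s,
      cov[X u, X t; μ] = if u = t then ∫ ω, X t ω ^ 2 ∂μ else 0 := by
    intro u hu t ht
    simp only [covariance, hmean u hu, hmean t ht, sub_zero]
    split_ifs with h
    · simp [h, sq]
    rcases lt_or_gt_of_ne h with hut | htu
    · exact horth u hu t ht hut
    · simpa [mul_comm] using horth t ht u hu htu
  rw [variance_fun_sum' hX]
  exact sum_congr rfl fun u hu => by
    rw [sum_congr rfl (hcov u hu), sum_ite_eq, if_pos hu]

lemma card_mul_le_sum_integral {ι : Type*} {s : Finset ι} {F : ι → Ω → ℝ} {c : ℝ}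
    (hF : ∀ i ∈ s, Integrable (F i) μ) (hc : ∀ i ∈ s, ∀ᵐ ω ∂μ, c ≤ F i ω) :
    #s * c ≤ ∑ i ∈ s, ∫ ω, F i ω ∂μ := by
  rw [← nsmul_eq_mul, ← sum_const]
  refine sum_le_sum fun i hi => ?_
  simpa using integral_mono_ae (integrable_const c) (hF i hi) (hc i hi)

lemma sum_integral_eq_card_mul_iff {ι : Type*} {s : Finset ι} {F : ι → Ω → ℝ} {c : ℝ}
    (hF : ∀ i ∈ s, Integrable (F i) μ) (hc : ∀ i ∈ s, ∀ᵐ ω ∂μ, c ≤ F i ω) :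
    ∑ i ∈ s, ∫ ω, F i ω ∂μ = #s * c ↔ ∀ i ∈ s, F i =ᵐ[μ] fun _ => c := by
  have hnonneg : ∀ i ∈ s, 0 ≤ᵐ[μ] fun ω => F i ω - c := fun i hi =>
    (hc i hi).mono fun ω hω => sub_nonneg.2 hω
  have hsub : ∑ i ∈ s, ∫ ω, F i ω ∂μ - #s * c = ∑ i ∈ s, ∫ ω, (F i ω - c) ∂μ := by
    rw [sum_congr rfl fun i hi => integral_sub (hF i hi) (integrable_const c), sum_sub_distrib]
    simp
  rw [← sub_eq_zero, hsub,
    sum_eq_zero_iff_of_nonneg fun i hi => integral_nonneg_of_ae (hnonneg i hi)]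
  refine forall₂_congr fun i hi => ?_
  rw [integral_eq_zero_iff_of_nonneg_ae (hnonneg i hi) ((hF i hi).sub (integrable_const c))]
  exact Filter.eventually_congr (.of_forall fun ω => sub_eq_zero)

lemma card_mul_sq_sum_le_sum_integral {ι κ : Type*} [Fintype κ] {s : Finset ι} (a : κ → ℝ)
    {r : ι → Ω → κ → ℝ} (hr : ∀ i ∈ s, ∀ᵐ ω ∂μ, ∀ j, 0 < r i ω j)
    (hr1 : ∀ i ∈ s, ∀ᵐ ω ∂μ, ∑ j, r i ω j = 1)
    (hint : ∀ i ∈ s, Integrable (fun ω => ∑ j, a j ^ 2 / r i ω j) μ) :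
    #s * (∑ j, a j) ^ 2 ≤ ∑ i ∈ s, ∫ ω, ∑ j, a j ^ 2 / r i ω j ∂μ :=
  card_mul_le_sum_integral hint fun i hi => by
    filter_upwards [hr i hi, hr1 i hi] with ω hpos hsum
    exact sq_sum_le_sum_sq_div univ a (fun j _ => hpos j) hsum

lemma sum_integral_sum_sq_div_eq_card_mul_iff {ι κ : Type*} [Fintype κ] {s : Finset ι}
    (a : κ → ℝ) {r : ι → Ω → κ → ℝ} (hr : ∀ i ∈ s, ∀ᵐ ω ∂μ, ∀ j, 0 < r i ω j)
    (hr1 : ∀ i ∈ s, ∀ᵐ ω ∂μ, ∑ j, r i ω j = 1)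
    (hint : ∀ i ∈ s, Integrable (fun ω => ∑ j, a j ^ 2 / r i ω j) μ) (ha : ∑ j, a j ≠ 0) :
    ∑ i ∈ s, ∫ ω, ∑ j, a j ^ 2 / r i ω j ∂μ = #s * (∑ j, a j) ^ 2 ↔
      ∀ i ∈ s, ∀ j, (fun ω => r i ω j) =ᵐ[μ] fun _ => a j / ∑ k, a k := by
  rw [sum_integral_eq_card_mul_iff hint fun i hi => by
    filter_upwards [hr i hi, hr1 i hi] with ω hpos hsum
    exact sq_sum_le_sum_sq_div univ a (fun j _ => hpos j) hsum]
  refine forall₂_congr fun i hi => (Filter.eventually_congr ?_).trans ae_all_iff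
  filter_upwards [hr i hi, hr1 i hi] with ω hpos hsum
  simpa using sum_sq_div_eq_sq_sum_iff univ a (fun j _ => hpos j) hsum ha

end ProbabilityMeasure

section SamplingRound

variable {ι : Type*} [DecidableEq ι] [MeasurableSpace ι]

/-- One round of adaptive sampling. The σ-algebras `m ≤ m' ≤ m''` are the past, the past
together with the sampled index `I`, and the information after the round. The index is drawn with
the `m`-measurable probabilities `q`, and given `m'` the outcome `Y` is Bernoulli with success
probability `p I`. -/
structure IsSamplingRound (μ : Measure Ω) (m m' m'' : MeasurableSpace Ω) (p : ι → ℝ)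
    (q : Ω → ι → ℝ) (I : Ω → ι) (Y : Ω → ℝ) : Prop where
  le : m ≤ m'
  le_next : m' ≤ m''
  le_ambient : m'' ≤ m₀
  measurable_q : ∀ j, Measurable[m] fun ω => q ω j
  exists_pos_le_q : ∃ c > 0, ∀ᵐ ω ∂μ, ∀ j, c ≤ q ω j
  mem_Icc_p : ∀ j, p j ∈ Set.Icc (0 : ℝ) 1
  measurable_I : Measurable[m'] I
  measurable_Y : Measurable[m''] Y
  zero_or_one_Y : ∀ ω, Y ω = 0 ∨ Y ω = 1
  condExp_I : ∀ j, μ[fun ω => if I ω = j then (1 : ℝ) else 0 | m] =ᵐ[μ] fun ω => q ω j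
  condExp_Y : μ[Y | m'] =ᵐ[μ] fun ω => p (I ω)

-- `ipw`: inverse-probability-weighted
noncomputable def ipwResidual (p : ι → ℝ) (q : Ω → ι → ℝ) (I : Ω → ι) (Y : Ω → ℝ) (ω : Ω) : ℝ :=
  (Y ω - p (I ω)) / q ω (I ω)

namespace IsSamplingRound

variable {m' m'' : MeasurableSpace Ω} {p : ι → ℝ} {q : Ω → ι → ℝ} {I : Ω → ι} {Y : Ω → ℝ}

lemma mid_le_ambient (h : IsSamplingRound μ m m' m'' p q I Y) : m' ≤ m₀ :=
  h.le_next.trans h.le_ambient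

lemma ae_pos_q (h : IsSamplingRound μ m m' m'' p q I Y) : ∀ᵐ ω ∂μ, ∀ j, 0 < q ω j := by
  obtain ⟨c, hc, hqc⟩ := h.exists_pos_le_q
  exact hqc.mono fun ω hω j => hc.trans_le (hω j)

lemma measurable_p_comp [Countable ι] [MeasurableSingletonClass ι]
    (h : IsSamplingRound μ m m' m'' p q I Y) : Measurable[m'] fun ω => p (I ω) :=
  (measurable_of_countable p).comp h.measurable_I

lemma measurable_q_apply [Countable ι] [MeasurableSingletonClass ι]
    (h : IsSamplingRound μ m m' m'' p q I Y) : Measurable[m'] fun ω => q ω (I ω) :=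
  measurable_apply_index (fun j => (h.measurable_q j).mono h.le le_rfl) h.measurable_I

lemma measurable_ipwResidual [Countable ι] [MeasurableSingletonClass ι]
    (h : IsSamplingRound μ m m' m'' p q I Y) : Measurable[m''] (ipwResidual p q I Y) :=
  (h.measurable_Y.sub (h.measurable_p_comp.mono h.le_next le_rfl)).div
    (h.measurable_q_apply.mono h.le_next le_rfl)

lemma abs_sub_p_le_one (h : IsSamplingRound μ m m' m'' p q I Y) (ω : Ω) :
    |Y ω - p (I ω)| ≤ 1 := by
  have hp := h.mem_Icc_p (I ω)
  rw [abs_le]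
  rcases h.zero_or_one_Y ω with hY | hY <;> rw [hY] <;> constructor <;> linarith [hp.1, hp.2]

lemma memLp_sub_p [Countable ι] [MeasurableSingletonClass ι] [IsFiniteMeasure μ]
    (h : IsSamplingRound μ m m' m'' p q I Y) (r : ℝ≥0∞) : MemLp (Y - fun ω => p (I ω)) r μ :=
  MemLp.of_bound ((h.measurable_Y.mono h.le_ambient le_rfl).sub
    (h.measurable_p_comp.mono h.mid_le_ambient le_rfl)).aestronglyMeasurable
    1 (.of_forall h.abs_sub_p_le_one)

lemma memLp_ipwResidual [Countable ι] [MeasurableSingletonClass ι] [IsFiniteMeasure μ]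
    (h : IsSamplingRound μ m m' m'' p q I Y) (r : ℝ≥0∞) : MemLp (ipwResidual p q I Y) r μ := by
  obtain ⟨c, hc, hqc⟩ := h.exists_pos_le_q
  refine MemLp.of_bound (h.measurable_ipwResidual.mono h.le_ambient le_rfl).aestronglyMeasurable
    c⁻¹ ?_
  filter_upwards [hqc] with ω hω
  have hq := hc.trans_le (hω (I ω))
  rw [Real.norm_eq_abs, ipwResidual, abs_div, abs_of_pos hq, div_le_iff₀ hq]
  calc |Y ω - p (I ω)| ≤ c⁻¹ * c := by rw [inv_mul_cancel₀ hc.ne']; exact h.abs_sub_p_le_one ω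
    _ ≤ c⁻¹ * q ω (I ω) := by gcongr; exact hω _

lemma integrable_inv_q_pow [IsFiniteMeasure μ] (h : IsSamplingRound μ m m' m'' p q I Y)
    (j : ι) (n : ℕ) : Integrable (fun ω => (q ω j)⁻¹ ^ n) μ := by
  obtain ⟨c, hc, hqc⟩ := h.exists_pos_le_q
  refine Integrable.of_bound (((h.measurable_q j).mono (h.le.trans h.mid_le_ambient)
    le_rfl).inv.pow_const n).aestronglyMeasurable (c⁻¹ ^ n) ?_
  filter_upwards [hqc] with ω hω
  rw [norm_pow, Real.norm_eq_abs, abs_of_pos (inv_pos.2 (hc.trans_le (hω j)))]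
  exact pow_le_pow_left₀ (inv_nonneg.2 (hc.trans_le (hω j)).le) (inv_anti₀ hc (hω j)) n

lemma integrable_div_q [IsFiniteMeasure μ] (h : IsSamplingRound μ m m' m'' p q I Y) (a : ℝ)
    (j : ι) : Integrable (fun ω => a / q ω j) μ :=
  ((h.integrable_inv_q_pow j 1).const_mul a).congr (.of_forall fun ω => by simp [div_eq_mul_inv])

lemma condExp_residual [Countable ι] [MeasurableSingletonClass ι] [IsFiniteMeasure μ]
    (h : IsSamplingRound μ m m' m'' p q I Y) :
    μ[Y - (fun ω => p (I ω)) | m'] =ᵐ[μ] 0 ∧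
      μ[(Y - fun ω => p (I ω)) ^ 2 | m'] =ᵐ[μ]
        (fun ω => p (I ω)) * (1 - fun ω => p (I ω)) :=
  condExp_bernoulli_residual h.mid_le_ambient h.zero_or_one_Y
    (h.measurable_Y.mono h.le_ambient le_rfl) h.measurable_p_comp.stronglyMeasurable
    (fun ω => h.mem_Icc_p (I ω)) h.condExp_Y

lemma condExp_ipwResidual [Countable ι] [MeasurableSingletonClass ι] [IsFiniteMeasure μ]
    (h : IsSamplingRound μ m m' m'' p q I Y) : μ[ipwResidual p q I Y | m] =ᵐ[μ] 0 := by
  have hX : ipwResidual p q I Y = (fun ω => (q ω (I ω))⁻¹) * (Y - fun ω => p (I ω)) := by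
    ext ω; simp [ipwResidual, div_eq_inv_mul]
  have hX0 : μ[ipwResidual p q I Y | m'] =ᵐ[μ] 0 := by
    rw [hX]
    exact condExp_mul_eq_zero_of_condExp_eq_zero h.measurable_q_apply.inv.stronglyMeasurable
      (hX ▸ (h.memLp_ipwResidual 1).integrable le_rfl) ((h.memLp_sub_p 1).integrable le_rfl)
      h.condExp_residual.1
  exact (condExp_condExp_of_le h.le h.mid_le_ambient).symm.trans
    ((condExp_congr_ae hX0).trans (by rw [condExp_zero]))

lemma integral_ipwResidual_sq [Fintype ι] [MeasurableSingletonClass ι] [IsFiniteMeasure μ]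
    (h : IsSamplingRound μ m m' m'' p q I Y) :
    ∫ ω, ipwResidual p q I Y ω ^ 2 ∂μ = ∫ ω, ∑ j, p j * (1 - p j) / q ω j ∂μ := by
  set w : Ω → ι → ℝ := fun ω j => (q ω j)⁻¹ ^ 2 * (p j * (1 - p j))
  have hX : (fun ω => ipwResidual p q I Y ω ^ 2)
      = (fun ω => (q ω (I ω))⁻¹ ^ 2) * (Y - fun ω => p (I ω)) ^ 2 := by
    ext ω; simp [ipwResidual, div_eq_inv_mul, mul_pow]
  have hw : ∀ j, StronglyMeasurable[m] fun ω => w ω j := fun j =>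
    (((h.measurable_q j).inv.pow_const 2).mul_const _).stronglyMeasurable
  calc ∫ ω, ipwResidual p q I Y ω ^ 2 ∂μ
      = ∫ ω, (q ω (I ω))⁻¹ ^ 2 * ((Y - fun ω => p (I ω)) ^ 2) ω ∂μ := by rw [hX]; rfl
    _ = ∫ ω, w ω (I ω) ∂μ :=
        integral_mul_eq_of_condExp_eq h.mid_le_ambient
          (h.measurable_q_apply.inv.pow_const 2).stronglyMeasurable
          (hX ▸ (h.memLp_ipwResidual 2).integrable_sq) (h.memLp_sub_p 2).integrable_sq
          h.condExp_residual.2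
    _ = ∑ j, ∫ ω, w ω j * q ω j ∂μ :=
        integral_apply_index_eq_sum (h.le.trans h.mid_le_ambient)
          (h.measurable_I.mono h.mid_le_ambient le_rfl) h.condExp_I hw
          fun j => (h.integrable_inv_q_pow j 2).mul_const _
    _ = ∑ j, ∫ ω, p j * (1 - p j) / q ω j ∂μ := by
        refine sum_congr rfl fun j _ => integral_congr_ae ?_
        filter_upwards [h.ae_pos_q] with ω hω
        have hq := (hω j).ne'
        simp only [w]
        field_simp
    _ = ∫ ω, ∑ j, p j * (1 - p j) / q ω j ∂μ :=
        (integral_finsetSum _ fun j _ => h.integrable_div_q _ j).symm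

end IsSamplingRound

end SamplingRound

end

theorem oracle_optimal_sampling_policy_general
    {Ω : Type*} {mΩ : MeasurableSpace Ω} (μ : Measure Ω) [IsProbabilityMeasure μ]
    (ℱ : Filtration ℕ mΩ)
    (N : ℕ) (hN : 1 ≤ N) (nb : ℕ)
    (τ : ℝ) (hτ : τ ∈ Set.Ioo (0 : ℝ) 1)
    (p : Fin N → ℝ) (hp : ∀ j, p j ∈ Set.Ioo (0 : ℝ) 1)
    (q : ℕ → Ω → Fin N → ℝ) (I : ℕ → Ω → Fin N) (Y : ℕ → Ω → ℝ)
    (hq_meas : ∀ t, 1 ≤ t → ∀ j, Measurable[ℱ (t - 1)] fun ω => q t ω j)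
    (hq_lb : ∀ t, 1 ≤ t → ∀ j, ∀ᵐ ω ∂μ, τ / N ≤ q t ω j)
    (hq_sum : ∀ t, 1 ≤ t → ∀ᵐ ω ∂μ, ∑ j, q t ω j = 1)
    (hY01 : ∀ t, 1 ≤ t → ∀ ω, Y t ω = 0 ∨ Y t ω = 1)
    (hI_dist : ∀ t, 1 ≤ t → ∀ j,
      μ[(fun ω => if I t ω = j then (1 : ℝ) else 0) | ℱ (t - 1)]
        =ᵐ[μ] fun ω => q t ω j)
    (hY_dist : ∀ t, 1 ≤ t →
      μ[(fun ω => if Y t ω = 1 then (1 : ℝ) else 0)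
          | ℱ (t - 1) ⊔ MeasurableSpace.comap (I t) (⊤ : MeasurableSpace (Fin N))]
        =ᵐ[μ] fun ω => p (I t ω))
    (hfilt : ∀ t, 1 ≤ t →
      ℱ (t - 1) ⊔ MeasurableSpace.comap (I t) (⊤ : MeasurableSpace (Fin N))
          ⊔ MeasurableSpace.comap (Y t) (inferInstance : MeasurableSpace ℝ)
        ≤ ℱ t)
    (M : Ω → ℝ)
    (hM : ∀ ω, M ω = ∑ t ∈ Icc 1 nb, (Y t ω - p (I t ω)) / q t ω (I t ω)) :
    (nb : ℝ) * (∑ j, Real.sqrt (p j * (1 - p j))) ^ 2 ≤ ProbabilityTheory.variance M μ ∧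
    (ProbabilityTheory.variance M μ
        = (nb : ℝ) * (∑ j, Real.sqrt (p j * (1 - p j))) ^ 2 ↔
      ∀ t, 1 ≤ t → t ≤ nb → ∀ j,
        (fun ω => q t ω j) =ᵐ[μ]
          fun _ => Real.sqrt (p j * (1 - p j)) / ∑ k, Real.sqrt (p k * (1 - p k))) := by
  set a : Fin N → ℝ := fun j => Real.sqrt (p j * (1 - p j))
  have ha_sq : ∀ j, p j * (1 - p j) = a j ^ 2 := fun j =>
    (Real.sq_sqrt (mul_nonneg (hp j).1.le (sub_nonneg.2 (hp j).2.le))).symm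
  have ha : ∑ j, a j ≠ 0 := (sum_pos (fun j _ => Real.sqrt_pos.2
    (mul_pos (hp j).1 (sub_pos.2 (hp j).2))) ⟨⟨0, hN⟩, mem_univ _⟩).ne'
  have hround : ∀ t ∈ Icc 1 nb, IsSamplingRound μ (ℱ (t - 1))
      (ℱ (t - 1) ⊔ MeasurableSpace.comap (I t) ⊤) (ℱ t) p (q t) (I t) (Y t) := fun t ht =>
    have ht1 : 1 ≤ t := (mem_Icc.1 ht).1
    { le := le_sup_left
      le_next := le_sup_left.trans (hfilt t ht1)
      le_ambient := ℱ.le t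
      measurable_q := hq_meas t ht1
      exists_pos_le_q := ⟨τ / N, div_pos hτ.1 (Nat.cast_pos.2 hN), ae_all_iff.2 (hq_lb t ht1)⟩
      mem_Icc_p := fun j => Set.Ioo_subset_Icc_self (hp j)
      measurable_I := Measurable.of_comap_le le_sup_right
      measurable_Y := Measurable.of_comap_le (le_sup_right.trans (hfilt t ht1))
      zero_or_one_Y := hY01 t ht1
      condExp_I := hI_dist t ht1
      condExp_Y := by
        convert hY_dist t ht1 using 2
        ext ω; rcases hY01 t ht1 ω with h | h <;> simp [h] }
  have hvar : variance M μ = ∑ t ∈ Icc 1 nb, ∫ ω, ∑ j, a j ^ 2 / q t ω j ∂μ := by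
    rw [show M = fun ω => ∑ t ∈ Icc 1 nb, ipwResidual p (q t) (I t) (Y t) ω from funext hM,
      variance_sum_eq_sum_integral_sq (ℱ := ℱ)
        (fun t ht => (hround t ht).measurable_ipwResidual.stronglyMeasurable)
        (fun t ht => (hround t ht).memLp_ipwResidual 2)
        (fun t ht => (hround t ht).condExp_ipwResidual)]
    simp only [← ha_sq]
    exact sum_congr rfl fun t ht => (hround t ht).integral_ipwResidual_sq
  have hr : ∀ t ∈ Icc 1 nb, ∀ᵐ ω ∂μ, ∀ j, 0 < q t ω j := fun t ht => (hround t ht).ae_pos_q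
  have hr1 : ∀ t ∈ Icc 1 nb, ∀ᵐ ω ∂μ, ∑ j, q t ω j = 1 := fun t ht => hq_sum t (mem_Icc.1 ht).1
  have hint : ∀ t ∈ Icc 1 nb, Integrable (fun ω => ∑ j, a j ^ 2 / q t ω j) μ := fun t ht =>
    integrable_finsetSum _ fun j _ => (hround t ht).integrable_div_q _ j
  have hcard : (#(Icc 1 nb) : ℝ) = nb := by simp
  rw [hvar, ← hcard, sum_integral_sum_sq_div_eq_card_mul_iff a hr hr1 hint ha]
  exact ⟨card_mul_sq_sum_le_sum_integral a hr hr1 hint,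
    by simp only [mem_Icc, and_imp]; exact Iff.rfl⟩

/-- **Theorem 2: oracle-optimal sequential sampling policy.**
In the oracle adaptive sampling model (`p ∈ (0,1)^N`; `ℱ_{t−1}`-measurable random
probability vectors `q t ∈ (0,1]^N` with `q_t(j) ≥ τ/N` a.s. for a fixed `τ ∈ (0,1)`;
`I t` sampled from `q t` given `ℱ_{t−1}`; `Y t ∈ {0,1}` with
`P(Y_t = 1 | ℱ_{t−1}, I_t) = p_{I_t}` a.s.; `ℱ t ⊇ σ(ℱ_{t−1}, I_t, Y_t)`), the statistic
`M_{n_b} = Σ_{t=1}^{n_b} (Y_t − p_{I_t})/q_t(I_t)` satisfies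
`Var(M_{n_b}) ≥ n_b·(Σ_j √(p_j(1 − p_j)))²`, with equality exactly when for every
`1 ≤ t ≤ n_b` and every `j`, `q_t(j) = √(p_j(1−p_j)) / Σ_k √(p_k(1−p_k))` almost
surely; i.e. the variance-minimizing policy is time-independent and uniquely given by
`q_t(j) ∝ √(p_j(1 − p_j))`. -/
theorem oracle_optimal_sampling_policy
    {Ω : Type*} {mΩ : MeasurableSpace Ω} (μ : Measure Ω) [IsProbabilityMeasure μ]
    (ℱ : Filtration ℕ mΩ)
    (N : ℕ) (hN : 1 ≤ N) (nb : ℕ) (hnb : 1 ≤ nb)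
    (τ : ℝ) (hτ : τ ∈ Set.Ioo (0 : ℝ) 1)
    (p : Fin N → ℝ) (hp : ∀ j, p j ∈ Set.Ioo (0 : ℝ) 1)
    (q : ℕ → Ω → Fin N → ℝ) (I : ℕ → Ω → Fin N) (Y : ℕ → Ω → ℝ)
    (hq_meas : ∀ t, 1 ≤ t → ∀ j, Measurable[ℱ (t - 1)] fun ω => q t ω j)
    (hq_lb : ∀ t, 1 ≤ t → ∀ j, ∀ᵐ ω ∂μ, τ / N ≤ q t ω j)
    (hq_sum : ∀ t, 1 ≤ t → ∀ᵐ ω ∂μ, ∑ j, q t ω j = 1)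
    (hI_meas : ∀ t, 1 ≤ t → Measurable (I t))
    (hY_meas : ∀ t, 1 ≤ t → Measurable (Y t))
    (hY01 : ∀ t, 1 ≤ t → ∀ ω, Y t ω = 0 ∨ Y t ω = 1)
    (hI_dist : ∀ t, 1 ≤ t → ∀ j,
      μ[(fun ω => if I t ω = j then (1 : ℝ) else 0) | ℱ (t - 1)]
        =ᵐ[μ] fun ω => q t ω j)
    (hY_dist : ∀ t, 1 ≤ t →
      μ[(fun ω => if Y t ω = 1 then (1 : ℝ) else 0)
          | ℱ (t - 1) ⊔ MeasurableSpace.comap (I t) (⊤ : MeasurableSpace (Fin N))]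
        =ᵐ[μ] fun ω => p (I t ω))
    (hfilt : ∀ t, 1 ≤ t →
      ℱ (t - 1) ⊔ MeasurableSpace.comap (I t) (⊤ : MeasurableSpace (Fin N))
          ⊔ MeasurableSpace.comap (Y t) (inferInstance : MeasurableSpace ℝ)
        ≤ ℱ t)
    (M : Ω → ℝ)
    (hM : ∀ ω, M ω = ∑ t ∈ Icc 1 nb, (Y t ω - p (I t ω)) / q t ω (I t ω)) :
    (nb : ℝ) * (∑ j, Real.sqrt (p j * (1 - p j))) ^ 2 ≤ ProbabilityTheory.variance M μ ∧
    (ProbabilityTheory.variance M μ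
        = (nb : ℝ) * (∑ j, Real.sqrt (p j * (1 - p j))) ^ 2 ↔
      ∀ t, 1 ≤ t → t ≤ nb → ∀ j,
        (fun ω => q t ω j) =ᵐ[μ]
          fun _ => Real.sqrt (p j * (1 - p j)) / ∑ k, Real.sqrt (p k * (1 - p k))) :=
  oracle_optimal_sampling_policy_general μ ℱ N hN nb τ hτ p hp q I Y hq_meas hq_lb hq_sum hY01
    hI_dist hY_dist hfilt M hM
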